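/- Let X ∈ ℝ^{N×N} be invertible with eigendecomposition X X^T = U Λ U^T (Λ diagonal positive, U orthogonal). If 0 < μ < λ_min(Λ^{-1/2} U^T (X + X^T) U Λ^{-1/2}), then ‖I - μX‖₂ < 1. -/

import Mathlib

/-!
With `W = U Λ^{1/2}` one has `W S Wᵀ = X + Xᵀ` and `W Wᵀ = X Xᵀ`, so conjugating `S - μ I ≻ 0`
by the invertible `W` gives `X + Xᵀ - μ X Xᵀ ≻ 0`. As
`I - (I - μX)(I - μX)ᵀ = μ (X + Xᵀ - μ X Xᵀ)`, the transpose of `I - μX` strictly shrinks every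
nonzero vector; by compactness of the unit sphere its norm, which equals `‖I - μX‖₂`, is `< 1`.
-/

open Matrix ComplexOrder

theorem ContinuousLinearMap.norm_lt_one_of_norm_apply_lt {𝕜 E F : Type*} [DenselyNormedField 𝕜]
    [NormedAlgebra ℝ 𝕜] [NormedAddCommGroup E] [NormedSpace 𝕜 E] [ProperSpace E]
    [SeminormedAddCommGroup F] [NormedSpace 𝕜 F] (f : E →L[𝕜] F)
    (hf : ∀ x, x ≠ 0 → ‖f x‖ < ‖x‖) : ‖f‖ < 1 := by
  rw [← f.sSup_sphere_eq_norm]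
  rcases (Metric.sphere (0 : E) 1).eq_empty_or_nonempty with hs | hs
  · simp [hs]
  obtain ⟨x, hx, hmax⟩ :=
    ((isCompact_sphere 0 1).image f.continuous.norm).sSup_mem (hs.image _)
  rw [← hmax]
  rw [mem_sphere_zero_iff_norm] at hx
  simpa [hx] using hf x (norm_ne_zero_iff.mp (by simp [hx]))

namespace Matrix

variable {𝕜 n : Type*} [RCLike 𝕜] [Fintype n] [DecidableEq n]

theorem IsHermitian.posDef_sub_smul_one {A : Matrix n n 𝕜} (hA : A.IsHermitian) {μ : ℝ}
    (hμ : ∀ i, μ < hA.eigenvalues i) : (A - μ • 1).PosDef := by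
  set u := hA.eigenvectorUnitary
  have hconj : (u : Matrix n n 𝕜) * (μ • 1) * star (u : Matrix n n 𝕜) = μ • 1 := by
    rw [mul_smul_comm, mul_one, smul_mul_assoc, Unitary.mul_star_self_of_mem u.2]
  have hdiag : diagonal (RCLike.ofReal ∘ fun i => hA.eigenvalues i - μ) =
      diagonal (RCLike.ofReal ∘ hA.eigenvalues) - (μ • 1 : Matrix n n 𝕜) := by
    ext i j
    rcases eq_or_ne i j with rfl | hij <;> simp [*, RCLike.real_smul_eq_coe_mul]
  have hA' : A - μ • 1 = (u : Matrix n n 𝕜) *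
      diagonal (RCLike.ofReal ∘ fun i => hA.eigenvalues i - μ) * star (u : Matrix n n 𝕜) := by
    conv_lhs => rw [hA.spectral_theorem, Unitary.conjStarAlgAut_apply]
    rw [hdiag, mul_sub, sub_mul, hconj]
  rw [hA', Unitary.isUnit_coe.posDef_star_right_conjugate_iff, posDef_diagonal_iff]
  simpa using hμ

theorem norm_toEuclideanCLM_lt_one_of_posDef_one_sub_conjTranspose_mul_self {A : Matrix n n 𝕜}
    (hA : (1 - Aᴴ * A).PosDef) : ‖toEuclideanCLM (𝕜 := 𝕜) (n := n) A‖ < 1 := by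
  refine ContinuousLinearMap.norm_lt_one_of_norm_apply_lt _ fun x hx => ?_
  have hnorm (y : EuclideanSpace 𝕜 n) : star y.ofLp ⬝ᵥ y.ofLp = ((‖y‖ ^ 2 : ℝ) : 𝕜) := by
    rw [dotProduct_comm, ← EuclideanSpace.inner_eq_star_dotProduct, inner_self_eq_norm_sq_to_K,
      RCLike.ofReal_pow]
  have hpos := hA.dotProduct_mulVec_pos (x := x.ofLp) (by simpa using hx)
  rw [sub_mulVec, one_mulVec, ← mulVec_mulVec, dotProduct_sub, dotProduct_mulVec, ← star_mulVec,
    ← ofLp_toEuclideanCLM, hnorm, hnorm, ← RCLike.ofReal_sub, RCLike.ofReal_pos, sub_pos] at hpos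
  exact lt_of_pow_lt_pow_left₀ 2 (norm_nonneg x) hpos

theorem norm_toEuclideanCLM_lt_one_of_posDef_one_sub_mul_conjTranspose {A : Matrix n n 𝕜}
    (hA : (1 - A * Aᴴ).PosDef) : ‖toEuclideanCLM (𝕜 := 𝕜) (n := n) A‖ < 1 := by
  have hA_star : (1 - Aᴴᴴ * Aᴴ).PosDef := by rwa [conjTranspose_conjTranspose]
  calc ‖toEuclideanCLM (𝕜 := 𝕜) (n := n) A‖ = ‖toEuclideanCLM (𝕜 := 𝕜) (n := n) Aᴴ‖ :=
        open scoped Matrix.Norms.L2Operator in (l2_opNorm_conjTranspose A).symm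
    _ < 1 := norm_toEuclideanCLM_lt_one_of_posDef_one_sub_conjTranspose_mul_self hA_star

theorem one_sub_smul_mul_transpose_one_sub_smul {R : Type*} [CommRing R] (X : Matrix n n R)
    (μ : R) : 1 - (1 - μ • X) * (1 - μ • X)ᵀ = μ • (X + Xᵀ - μ • (X * Xᵀ)) := by
  rw [transpose_sub, transpose_one, transpose_smul]
  simp only [sub_mul, mul_sub, one_mul, mul_one, smul_mul_smul_comm]
  module

theorem posDef_sub_smul_of_posDef_inv_sqrt_congr_sub_smul {A U : Matrix n n ℝ} {d : n → ℝ}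
    (hU : U * Uᵀ = 1) (hd : ∀ i, 0 < d i) {μ : ℝ}
    (h : (diagonal (fun i => (Real.sqrt (d i))⁻¹) * Uᵀ * A * U *
      diagonal (fun i => (Real.sqrt (d i))⁻¹) - μ • 1).PosDef) :
    (A - μ • (U * diagonal d * Uᵀ)).PosDef := by
  set W := U * diagonal (fun i => Real.sqrt (d i))
  set V := diagonal (fun i => (Real.sqrt (d i))⁻¹) * Uᵀ
  have hsqrt (i : n) : Real.sqrt (d i) ≠ 0 := (Real.sqrt_pos.mpr (hd i)).ne'
  have hWV : W * V = 1 := by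
    rw [Matrix.mul_assoc, ← Matrix.mul_assoc (diagonal _), diagonal_mul_diagonal]
    simp [hsqrt, hU]
  have hWW : W * Wᵀ = U * diagonal d * Uᵀ := by
    rw [transpose_mul, diagonal_transpose, Matrix.mul_assoc, ← Matrix.mul_assoc (diagonal _),
      diagonal_mul_diagonal, ← Matrix.mul_assoc]
    simp [Real.mul_self_sqrt (hd _).le]
  have hWA : W * (V * A * U * diagonal (fun i => (Real.sqrt (d i))⁻¹)) * Wᵀ = A :=
    calc _ = W * V * A * (W * V)ᵀ := by
          simp only [W, V, transpose_mul, transpose_transpose, diagonal_transpose,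
            Matrix.mul_assoc]
      _ = A := by rw [hWV, transpose_one, Matrix.one_mul, Matrix.mul_one]
  rwa [← (IsUnit.of_mul_eq_one _ hWV).posDef_star_right_conjugate_iff, star_eq_conjTranspose,
    conjTranspose_eq_transpose_of_trivial, mul_sub, sub_mul, hWA, mul_smul_comm, smul_mul_assoc,
    mul_one, hWW] at h

end Matrix

theorem stmt12_general {N : ℕ}
    (X U : Matrix (Fin N) (Fin N) ℝ) (d : Fin N → ℝ)
    (hU : U * Uᵀ = 1 ∧ Uᵀ * U = 1)
    (hd : ∀ i, 0 < d i)
    (hdec : X * Xᵀ = U * diagonal d * Uᵀ)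
    (S : Matrix (Fin N) (Fin N) ℝ)
    (hSdef : S = diagonal (fun i => (Real.sqrt (d i))⁻¹) * Uᵀ * (X + Xᵀ) * U *
      diagonal (fun i => (Real.sqrt (d i))⁻¹))
    (hS : S.IsHermitian)
    (μ : ℝ) (hμ0 : 0 < μ) (hμ : μ < ⨅ i, hS.eigenvalues i) :
    ‖Matrix.toEuclideanCLM (𝕜 := ℝ) (n := Fin N) (1 - μ • X)‖ < 1 := by
  have hSμ : (S - μ • 1).PosDef :=
    hS.posDef_sub_smul_one fun i => hμ.trans_le (ciInf_le (Set.finite_range _).bddBelow i)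
  rw [hSdef] at hSμ
  have hQ := posDef_sub_smul_of_posDef_inv_sqrt_congr_sub_smul hU.1 hd hSμ
  rw [← hdec] at hQ
  refine norm_toEuclideanCLM_lt_one_of_posDef_one_sub_mul_conjTranspose ?_
  rw [conjTranspose_eq_transpose_of_trivial, one_sub_smul_mul_transpose_one_sub_smul]
  exact hQ.smul hμ0

/-- Let `X` be invertible with `X Xᵀ = U Λ Uᵀ`, `U` orthogonal and
`Λ = diag(d)` with positive entries. If `0 < μ < λ_min(Λ^{-1/2} Uᵀ (X + Xᵀ) U Λ^{-1/2})`
then `‖I - μX‖₂ < 1` (spectral norm). -/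
theorem stmt12 {N : ℕ} (hN : 0 < N)
    (X U : Matrix (Fin N) (Fin N) ℝ) (d : Fin N → ℝ)
    (hX : IsUnit X.det)
    (hU : U * Uᵀ = 1 ∧ Uᵀ * U = 1)
    (hd : ∀ i, 0 < d i)
    (hdec : X * Xᵀ = U * diagonal d * Uᵀ)
    (S : Matrix (Fin N) (Fin N) ℝ)
    (hSdef : S = diagonal (fun i => (Real.sqrt (d i))⁻¹) * Uᵀ * (X + Xᵀ) * U *
      diagonal (fun i => (Real.sqrt (d i))⁻¹))
    (hS : S.IsHermitian)
    (μ : ℝ) (hμ0 : 0 < μ) (hμ : μ < ⨅ i, hS.eigenvalues i) :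
    ‖Matrix.toEuclideanCLM (𝕜 := ℝ) (n := Fin N) (1 - μ • X)‖ < 1 :=
  stmt12_general X U d hU hd hdec S hSdef hS μ hμ0 hμ
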